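/- arXiv:math/0508398 — 4 statements merged into one kernel-verified Lean document; each statement's English description precedes it below -/
import Mathlib

section
/- Let V be a finite-dimensional vector space over 𝕂, let X, Y : V → V be linear maps, and let θ ∈ 𝕂 be nonzero. Write V_X(θ) = {v ∈ V : Xv = θv}. Then the following are equivalent: (i) the map X³Y − [3]_q X²YX + [3]_q XYX² − YX³ vanishes on V_X(θ); (ii) Y·V_X(θ) ⊆ V_X(q²θ) + V_X(θ) + V_X(q⁻²θ). -/
noncomputable section

open Submodule

/-- `[n]_q = (qⁿ − q⁻ⁿ)/(q − q⁻¹)`. -/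
def qInt {K : Type*} [Field K] (q : K) (n : ℕ) : K :=
  (q ^ n - q⁻¹ ^ n) / (q - q⁻¹)

lemma swap_factors {K V : Type*} [Field K] [AddCommGroup V] [Module K V]
    (X : Module.End K V) (s t : K) :
    (X - s • 1) * (X - t • 1) = (X - t • 1) * (X - s • 1) := by
  simp only [mul_sub, sub_mul, smul_mul_assoc, mul_smul_comm, mul_one, one_mul, smul_smul,
    smul_sub]
  rw [mul_comm s t]
  abel

lemma factor_ker {K V : Type*} [Field K] [AddCommGroup V] [Module K V]
    (X : Module.End K V) (a b c : K) (hab : a ≠ b) (hac : a ≠ c) (hbc : b ≠ c) (w : V) :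
    ((X - a • 1) * (X - b • 1) * (X - c • 1)) w = 0 ↔
      w ∈ Module.End.eigenspace X a ⊔ Module.End.eigenspace X b ⊔ Module.End.eigenspace X c := by
  have key : ∀ (s : K) (u : V), (X - s • 1) u = X u - s • u := by
    intro s u; simp
  have eig : ∀ (s : K) (u : V), (X - s • 1) u = 0 → u ∈ Module.End.eigenspace X s := by
    intro s u h
    rw [Module.End.mem_eigenspace_iff]
    rw [key, sub_eq_zero] at h
    exact h
  constructor
  · intro h
    set α := ((a - b) * (a - c))⁻¹ with hα
    set β := ((b - a) * (b - c))⁻¹ with hβ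
    set γ := ((c - a) * (c - b))⁻¹ with hγ
    set wa := α • ((X - b • 1) * (X - c • 1)) w with hwa
    set wb := β • ((X - a • 1) * (X - c • 1)) w with hwb
    set wc := γ • ((X - a • 1) * (X - b • 1)) w with hwc
    have ha : wa ∈ Module.End.eigenspace X a := by
      apply eig
      rw [hwa, map_smul]
      have : (X - a • 1) (((X - b • 1) * (X - c • 1)) w)
          = ((X - a • 1) * (X - b • 1) * (X - c • 1)) w := by
        simp [Module.End.mul_apply, mul_assoc]
      rw [this, h, smul_zero]
    have hb : wb ∈ Module.End.eigenspace X b := by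
      apply eig
      rw [hwb, map_smul]
      have : (X - b • 1) (((X - a • 1) * (X - c • 1)) w)
          = ((X - a • 1) * (X - b • 1) * (X - c • 1)) w := by
        rw [swap_factors X a b]
        simp [Module.End.mul_apply, mul_assoc]
      rw [this, h, smul_zero]
    have hc : wc ∈ Module.End.eigenspace X c := by
      apply eig
      rw [hwc, map_smul]
      have : (X - c • 1) (((X - a • 1) * (X - b • 1)) w)
          = ((X - a • 1) * (X - b • 1) * (X - c • 1)) w := by
        rw [mul_assoc, swap_factors X b c, ← mul_assoc, swap_factors X a c]
        simp [Module.End.mul_apply, mul_assoc]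
      rw [this, h, smul_zero]
    have hsum : w = wa + wb + wc := by
      have expand : ∀ s t : K, ((X - s • 1) * (X - t • 1)) w
          = X (X w) - s • X w - t • X w + (s * t) • w := by
        intro s t
        simp [Module.End.mul_apply, key, map_sub, map_smul, smul_sub, smul_smul]
        abel
      rw [hwa, hwb, hwc, expand, expand, expand]
      have h1 : a - b ≠ 0 := sub_ne_zero.mpr hab
      have h2 : a - c ≠ 0 := sub_ne_zero.mpr hac
      have h3 : b - c ≠ 0 := sub_ne_zero.mpr hbc
      have h4 : b - a ≠ 0 := sub_ne_zero.mpr hab.symm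
      have h5 : c - a ≠ 0 := sub_ne_zero.mpr hac.symm
      have h6 : c - b ≠ 0 := sub_ne_zero.mpr hbc.symm
      match_scalars <;> rw [hα, hβ, hγ] <;> field_simp <;> ring
    rw [hsum]
    exact add_mem (add_mem (mem_sup_left (mem_sup_left ha)) (mem_sup_left (mem_sup_right hb)))
      (mem_sup_right hc)
  · intro hw
    obtain ⟨u, hu, z, hz, rfl⟩ := mem_sup.mp hw
    obtain ⟨x, hx, y, hy, rfl⟩ := mem_sup.mp hu
    have kills : ∀ (s : K) (u : V), u ∈ Module.End.eigenspace X s →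
        ((X - a • 1) * (X - b • 1) * (X - c • 1)) u = 0 ∨ True := fun _ _ _ => Or.inr trivial
    have killa : ((X - a • 1) * (X - b • 1) * (X - c • 1)) x = 0 := by
      rw [swap_factors X a b, mul_assoc, swap_factors X a c]
      have : (X - a • 1) x = 0 := by
        rw [key, sub_eq_zero]; exact Module.End.mem_eigenspace_iff.mp hx
      simp [Module.End.mul_apply, this]
    have killb : ((X - a • 1) * (X - b • 1) * (X - c • 1)) y = 0 := by
      rw [mul_assoc, swap_factors X b c, ← mul_assoc]
      have : (X - b • 1) y = 0 := by
        rw [key, sub_eq_zero]; exact Module.End.mem_eigenspace_iff.mp hy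
      simp [Module.End.mul_apply, this]
    have killc : ((X - a • 1) * (X - b • 1) * (X - c • 1)) z = 0 := by
      have : (X - c • 1) z = 0 := by
        rw [key, sub_eq_zero]; exact Module.End.mem_eigenspace_iff.mp hz
      simp [Module.End.mul_apply, this]
    simp [map_add, killa, killb, killc]

/-- Lemma 2.1: for a nonzero `θ`, the cubic `q`-Serre expression
`X³Y − [3]_q X²YX + [3]_q XYX² − YX³` vanishes on the eigenspace `V_X(θ)` if and only if
`Y · V_X(θ) ⊆ V_X(q²θ) + V_X(θ) + V_X(q⁻²θ)`. -/
theorem statement0 {K : Type*} [Field K] [IsAlgClosed K] [CharZero K]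
    (q : K) (hq : q ≠ 0) (hq1 : ∀ n : ℕ, 0 < n → q ^ n ≠ 1)
    {V : Type*} [AddCommGroup V] [Module K V] [FiniteDimensional K V]
    (X Y : Module.End K V) (θ : K) (hθ : θ ≠ 0) :
    (∀ v ∈ Module.End.eigenspace X θ,
        (X ^ 3 * Y - qInt q 3 • (X ^ 2 * Y * X) + qInt q 3 • (X * Y * X ^ 2) - Y * X ^ 3) v = 0)
      ↔ ∀ v ∈ Module.End.eigenspace X θ,
          Y v ∈ Module.End.eigenspace X (q ^ 2 * θ) ⊔ Module.End.eigenspace X θ ⊔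
            Module.End.eigenspace X (q⁻¹ ^ 2 * θ) := by
  have hq2 : q ^ 2 ≠ 1 := hq1 2 (by norm_num)
  have hq4 : q ^ 4 ≠ 1 := hq1 4 (by norm_num)
  have hqq : q - q⁻¹ ≠ 0 := by
    intro h
    apply hq2
    have := sub_eq_zero.mp h
    field_simp at this
    rw [← this]
  have h3 : qInt q 3 = q ^ 2 + 1 + q⁻¹ ^ 2 := by
    rw [qInt, div_eq_iff hqq]
    field_simp
    ring
  have hab : q ^ 2 * θ ≠ θ := by
    intro h
    exact hq2 (mul_right_cancel₀ hθ (h.trans (one_mul θ).symm))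
  have hbc : θ ≠ q⁻¹ ^ 2 * θ := by
    intro h
    have h' : (1 : K) = q⁻¹ ^ 2 := mul_right_cancel₀ hθ ((one_mul θ).trans h)
    apply hq2
    have h2 : q ^ 2 * q⁻¹ ^ 2 = 1 := by field_simp
    rw [← h', mul_one] at h2
    exact h2
  have hac : q ^ 2 * θ ≠ q⁻¹ ^ 2 * θ := by
    intro h
    have h' : q ^ 2 = q⁻¹ ^ 2 := mul_right_cancel₀ hθ h
    apply hq4
    have h2 : q ^ 2 * q⁻¹ ^ 2 = 1 := by field_simp
    rw [show (4 : ℕ) = 2 + 2 by norm_num, pow_add]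
    nth_rewrite 2 [h']
    exact h2
  have main : ∀ v ∈ Module.End.eigenspace X θ,
      (X ^ 3 * Y - qInt q 3 • (X ^ 2 * Y * X) + qInt q 3 • (X * Y * X ^ 2) - Y * X ^ 3) v
        = ((X - (q ^ 2 * θ) • 1) * (X - θ • 1) * (X - (q⁻¹ ^ 2 * θ) • 1)) (Y v) := by
    intro v hv
    have hXv : X v = θ • v := Module.End.mem_eigenspace_iff.mp hv
    rw [h3]
    simp only [LinearMap.sub_apply, LinearMap.add_apply, LinearMap.smul_apply,
      Module.End.mul_apply, pow_succ, pow_zero, one_mul, Module.End.one_apply,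
      hXv, map_sub, map_smul, smul_sub, smul_smul]
    match_scalars <;> field_simp <;> ring
  constructor
  · intro h v hv
    rw [← factor_ker X _ _ _ hab hac hbc (Y v), ← main v hv]
    exact h v hv
  · intro h v hv
    rw [main v hv, factor_ker X _ _ _ hab hac hbc (Y v)]
    exact h v hv
end
end

section
/- Let V be a nonzero finite-dimensional vector space over 𝕂 and let A, A* : V → V be linear maps. Then the following are equivalent: (i) A, A* is a q-geometric tridiagonal pair on V; (ii) A and A* satisfy the cubic q-Serre relations, neither A nor A* is nilpotent, and the only subspaces W ⊆ V with AW ⊆ W and A*W ⊆ W are 0 and V. -/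
noncomputable section

/-- `X, Y` satisfy the cubic `q`-Serre relations. -/
def QSerre {K V : Type*} [Field K] [AddCommGroup V] [Module K V]
    (q : K) (X Y : Module.End K V) : Prop :=
  X ^ 3 * Y - qInt q 3 • (X ^ 2 * Y * X) + qInt q 3 • (X * Y * X ^ 2) - Y * X ^ 3 = 0 ∧
  Y ^ 3 * X - qInt q 3 • (Y ^ 2 * X * Y) + qInt q 3 • (Y * X * Y ^ 2) - X * Y ^ 3 = 0

/-- `θ 0, …, θ d` is an ordering of the eigenvalues of `A` whose corresponding ordering of the
eigenspaces `V_i = V_A(θ i)` is standard: `B V_i ⊆ V_{i−1} + V_i + V_{i+1}` (with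
`V_{−1} = V_{d+1} = 0`). -/
def IsStdOrdering {K V : Type*} [Field K] [AddCommGroup V] [Module K V]
    (A B : Module.End K V) (d : ℕ) (θ : Fin (d + 1) → K) : Prop :=
  Function.Injective θ ∧
  (∀ i, Module.End.HasEigenvalue A (θ i)) ∧
  (∀ μ : K, Module.End.HasEigenvalue A μ → ∃ i, θ i = μ) ∧
  ∀ i : Fin (d + 1),
    Submodule.map B (Module.End.eigenspace A (θ i)) ≤
      ⨆ j : Fin (d + 1), ⨆ _ : ((i : ℕ) : ℤ) - 1 ≤ ((j : ℕ) : ℤ) ∧ ((j : ℕ) : ℤ) ≤ (i : ℕ) + 1,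
        Module.End.eigenspace A (θ j)

/-- `θ 0, …, θ d` is a `q`-string: `θ i = α q^{d−2i}` for some nonzero `α`. -/
def IsQString {K : Type*} [Field K] (q : K) (d : ℕ) (θ : Fin (d + 1) → K) : Prop :=
  ∃ α : K, α ≠ 0 ∧ ∀ i : Fin (d + 1), θ i = α * q ^ ((d : ℤ) - 2 * (i : ℕ))

/-- `A, B` is a tridiagonal pair on `V`. -/
def IsTridiagonalPair {K V : Type*} [Field K] [AddCommGroup V] [Module K V]
    (A B : Module.End K V) : Prop :=
  (⨆ μ : K, Module.End.eigenspace A μ) = ⊤ ∧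
  (⨆ μ : K, Module.End.eigenspace B μ) = ⊤ ∧
  (∃ (d : ℕ) (θ : Fin (d + 1) → K), IsStdOrdering A B d θ) ∧
  (∃ (δ : ℕ) (θ : Fin (δ + 1) → K), IsStdOrdering B A δ θ) ∧
  ∀ W : Submodule K V, Submodule.map A W ≤ W → Submodule.map B W ≤ W → W = ⊥ ∨ W = ⊤

/-- `A, B` is a `q`-geometric tridiagonal pair on `V`. -/
def IsQGeometricTDP {K V : Type*} [Field K] [AddCommGroup V] [Module K V]
    (q : K) (A B : Module.End K V) : Prop :=
  IsTridiagonalPair A B ∧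
  (∃ (d : ℕ) (θ : Fin (d + 1) → K), IsStdOrdering A B d θ ∧ IsQString q d θ) ∧
  (∃ (d : ℕ) (θ : Fin (d + 1) → K), IsStdOrdering B A d θ ∧ IsQString q d θ)

/-!
On the `θ`-eigenspace of `A`, the left-hand side `A³A* − [3]A²A*A + [3]AA*A² − A*A³` of the
first Serre relation acts as `A*` followed by `(A − θ)(A − q²θ)(A − q⁻²θ)`. For a standard
ordering that is a `q`-string, `θ_{i±1} = q^{∓2} θ_i`, so this cubic kills
`V_{i-1} + V_i + V_{i+1} ⊇ A* V_i` and the relation holds on every eigenspace. Conversely, the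
relation forces `A*` to map the `θ`-eigenspace into the sum of the `θ`, `q²θ`, `q⁻²θ`
eigenspaces. Starting from a nonzero eigenvalue `β` (which exists as `A` is not nilpotent), a
maximal run `m ≤ k ≤ M` of integers for which `β q^{2k}` is an eigenvalue spans an invariant
subspace, hence all of `V`; so `A` is diagonalizable and `β q^{2M}, …, β q^{2m}` is a standard
ordering that is a `q`-string.
-/

open Polynomial Module.End

lemma zpow_injective_of_pow_ne_one {K : Type*} [Field K] {q : K} (hq : q ≠ 0)
    (hq1 : ∀ n : ℕ, 0 < n → q ^ n ≠ 1) : Function.Injective fun n : ℤ => q ^ n := by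
  have hfin : ¬ IsOfFinOrder (Units.mk0 q hq) := by
    rw [← Units.isOfFinOrder_val, isOfFinOrder_iff_pow_eq_one]
    rintro ⟨n, hn, h⟩
    exact hq1 n hn h
  intro m n h
  apply injective_zpow_iff_not_isOfFinOrder.mpr hfin
  ext
  simpa [Units.val_zpow_eq_zpow_val] using h

lemma qInt_three {K : Type*} [Field K] {q : K} (hq : q ≠ 0) (h2 : q ^ 2 ≠ 1) :
    qInt q 3 = q ^ 2 + 1 + (q ^ 2)⁻¹ := by
  have hd : q - q⁻¹ ≠ 0 := by
    rw [sub_ne_zero]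
    intro h
    apply h2
    field_simp at h
    linear_combination h
  rw [qInt, div_eq_iff hd]
  field_simp
  ring

lemma Set.Finite.exists_maximal_Icc_subset {T : Set ℤ} (hT : T.Finite) {k : ℤ} (hk : k ∈ T) :
    ∃ m M, m ≤ M ∧ Set.Icc m M ⊆ T ∧ m - 1 ∉ T ∧ M + 1 ∉ T := by
  obtain ⟨b, hb⟩ := hT.bddAbove
  obtain ⟨a, ha⟩ := hT.bddBelow
  obtain ⟨M, ⟨hkM, hM⟩, hMmax⟩ := Int.exists_greatest_of_bdd
    (P := fun j => k ≤ j ∧ Set.Icc k j ⊆ T) ⟨b, fun j hj => hb (hj.2 ⟨hj.1, le_rfl⟩)⟩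
    ⟨k, le_rfl, by simpa using hk⟩
  obtain ⟨m, ⟨hmk, hm⟩, hmmin⟩ := Int.exists_least_of_bdd
    (P := fun j => j ≤ k ∧ Set.Icc j k ⊆ T) ⟨a, fun j hj => ha (hj.2 ⟨le_rfl, hj.1⟩)⟩
    ⟨k, le_rfl, by simpa using hk⟩
  refine ⟨m, M, hmk.trans hkM, fun j hj => ?_, fun h => ?_, fun h => ?_⟩
  · rcases le_total j k with hjk | hkj
    · exact hm ⟨hj.1, hjk⟩
    · exact hM ⟨hkj, hj.2⟩
  · have hext : Set.Icc (m - 1) k ⊆ T := fun j hj => by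
      rcases eq_or_lt_of_le hj.1 with rfl | hlt
      · exact h
      · exact hm ⟨by omega, hj.2⟩
    have := hmmin (m - 1) ⟨by omega, hext⟩
    omega
  · have hext : Set.Icc k (M + 1) ⊆ T := fun j hj => by
      rcases eq_or_lt_of_le hj.2 with rfl | hlt
      · exact h
      · exact hM ⟨hj.1, by omega⟩
    have := hMmax (M + 1) ⟨by omega, hext⟩
    omega

namespace IsQString

variable {K : Type*} [Field K] {q : K} {d : ℕ} {θ : Fin (d + 1) → K}

lemma apply_ne_zero (hq : q ≠ 0) (h : IsQString q d θ) (i : Fin (d + 1)) : θ i ≠ 0 := by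
  obtain ⟨α, hα, hθ⟩ := h
  rw [hθ i]
  exact mul_ne_zero hα (zpow_ne_zero _ hq)

lemma eq_sq_mul_of_succ_eq (hq : q ≠ 0) (h : IsQString q d θ) {i j : Fin (d + 1)}
    (hij : (j : ℕ) + 1 = i) : θ j = q ^ 2 * θ i := by
  obtain ⟨α, -, hθ⟩ := h
  rw [hθ i, hθ j, mul_left_comm, ← zpow_natCast, ← zpow_add₀ hq]
  congr 2
  omega

lemma injective (hq : q ≠ 0) (hq1 : ∀ n : ℕ, 0 < n → q ^ n ≠ 1) (h : IsQString q d θ) :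
    Function.Injective θ := by
  obtain ⟨α, hα, hθ⟩ := h
  intro i j hij
  rw [hθ i, hθ j] at hij
  have := zpow_injective_of_pow_ne_one hq hq1 (mul_left_cancel₀ hα hij)
  ext
  omega

end IsQString

namespace Module.End

variable {K V : Type*} [Field K] [AddCommGroup V] [Module K V] (f : Module.End K V)

lemma ker_aeval_X_sub_C (μ : K) : LinearMap.ker (aeval f (X - C μ)) = f.eigenspace μ := by
  ext v
  simp [sub_eq_zero, Module.algebraMap_end_apply]

lemma ker_aeval_mul_X_sub_C_three {a b c : K} (hab : a ≠ b) (hac : a ≠ c) (hbc : b ≠ c) :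
    LinearMap.ker (aeval f ((X - C a) * (X - C b) * (X - C c))) =
      f.eigenspace a ⊔ f.eigenspace b ⊔ f.eigenspace c := by
  have coprime {x y : K} (hxy : x ≠ y) : IsCoprime (X - C x) (X - C y) :=
    isCoprime_X_sub_C_of_isUnit_sub (sub_ne_zero.mpr hxy).isUnit
  rw [← sup_ker_aeval_eq_ker_aeval_mul_of_coprime f ((coprime hac).mul_left (coprime hbc)),
    ← sup_ker_aeval_eq_ker_aeval_mul_of_coprime f (coprime hab)]
  simp only [ker_aeval_X_sub_C]

variable {f}

lemma eigenspace_le_ker_aeval {μ : K} {p : K[X]} (hp : p.IsRoot μ) :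
    f.eigenspace μ ≤ LinearMap.ker (aeval f p) := fun v hv => by
  rw [LinearMap.mem_ker, aeval_apply_of_mem_apply_eq_smul (mem_eigenspace_iff.mp hv), hp.eq_zero,
    zero_smul]

lemma map_eigenspace_le (μ : K) : (f.eigenspace μ).map f ≤ f.eigenspace μ :=
  Submodule.map_le_iff_le_comap.mpr (mapsTo_genEigenspace_of_comm (Commute.refl f) μ 1)

lemma exists_eq_of_iSup_eigenspace_eq_top {ι : Type*} {θ : ι → K}
    (h : ⨆ i, f.eigenspace (θ i) = ⊤) {μ : K} (hμ : f.HasEigenvalue μ) : ∃ i, θ i = μ := by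
  by_contra! hne
  have hdisj := f.eigenspaces_iSupIndep.disjoint_biSup (x := μ) (y := Set.range θ)
    (by simpa using hne)
  rw [iSup_range, h, disjoint_top] at hdisj
  exact hμ hdisj

lemma not_isNilpotent_of_hasEigenvalue {μ : K} (hμ : μ ≠ 0) (h : f.HasEigenvalue μ) :
    ¬ IsNilpotent f :=
  fun hf => hμ (h.isNilpotent_of_isNilpotent hf).eq_zero

lemma exists_hasEigenvalue_ne_zero [IsAlgClosed K] [FiniteDimensional K V]
    (hf : ¬ IsNilpotent f) : ∃ μ, μ ≠ 0 ∧ f.HasEigenvalue μ := by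
  by_contra! h
  apply hf
  have hroots : (minpoly K f).roots = Multiset.replicate (minpoly K f).roots.card 0 :=
    Multiset.eq_replicate_card.mpr fun μ hμ => by
      by_contra hμ0
      exact h μ hμ0 (hasEigenvalue_iff_isRoot.mpr (isRoot_of_mem_roots hμ))
  have hmin : minpoly K f = X ^ (minpoly K f).roots.card := by
    rw [(IsAlgClosed.splits _).eq_prod_roots_of_monic
      (minpoly.monic (Algebra.IsIntegral.isIntegral f)), hroots]
    simp
  have := minpoly.aeval K f
  rw [hmin, map_pow, aeval_X] at this
  exact ⟨_, this⟩

end Module.End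

section QSerre

variable {K V : Type*} [Field K] [AddCommGroup V] [Module K V]

def qCubic (q θ : K) : K[X] :=
  (X - C θ) * (X - C (q ^ 2 * θ)) * (X - C ((q ^ 2)⁻¹ * θ))

lemma qCubic_eq {q : K} (hq : q ≠ 0) (h2 : q ^ 2 ≠ 1) (θ : K) :
    qCubic q θ = X ^ 3 - C (qInt q 3 * θ) * X ^ 2 + C (qInt q 3 * θ ^ 2) * X - C (θ ^ 3) := by
  have hinv : C q ^ 2 * C (q ^ 2)⁻¹ = (1 : K[X]) := by
    rw [← C_pow, ← C_mul, mul_inv_cancel₀ (pow_ne_zero 2 hq), C_1]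
  simp only [qCubic, qInt_three hq h2, C_mul, C_add, C_pow, C_1]
  linear_combination (C θ ^ 2 * X - C θ ^ 3) * hinv

lemma qCubic_isRoot {q θ μ : K} (h : μ = θ ∨ μ = q ^ 2 * θ ∨ μ = (q ^ 2)⁻¹ * θ) :
    (qCubic q θ).IsRoot μ := by
  rcases h with rfl | rfl | rfl <;> simp [qCubic]

def qSerreOp (q : K) (X Y : Module.End K V) : Module.End K V :=
  X ^ 3 * Y - qInt q 3 • (X ^ 2 * Y * X) + qInt q 3 • (X * Y * X ^ 2) - Y * X ^ 3

lemma qSerreOp_apply_of_mem_eigenspace {q : K} (hq : q ≠ 0) (h2 : q ^ 2 ≠ 1)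
    {X Y : Module.End K V} {θ : K} {v : V} (hv : v ∈ X.eigenspace θ) :
    qSerreOp q X Y v = aeval X (qCubic q θ) (Y v) := by
  have hXv : X v = θ • v := mem_eigenspace_iff.mp hv
  rw [qCubic_eq hq h2]
  simp only [qSerreOp, LinearMap.sub_apply, LinearMap.add_apply, LinearMap.smul_apply,
    Module.End.mul_apply, map_sub, map_add, map_mul, aeval_X, aeval_C,
    Module.algebraMap_end_apply, pow_succ, pow_zero, Module.End.one_apply, hXv, map_smul,
    smul_smul, map_one]
  module

lemma qSerreOp_eq_zero_of_isStdOrdering {q : K} (hq : q ≠ 0) (h2 : q ^ 2 ≠ 1)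
    {X Y : Module.End K V} {d : ℕ} {θ : Fin (d + 1) → K} (hstd : IsStdOrdering X Y d θ)
    (hθ : IsQString q d θ) (htop : ⨆ μ, X.eigenspace μ = ⊤) : qSerreOp q X Y = 0 := by
  refine LinearMap.ker_eq_top.mp (top_unique (htop ▸ iSup_le fun μ => ?_))
  by_cases hμ : X.eigenspace μ = ⊥
  · rw [hμ]
    exact bot_le
  obtain ⟨i, rfl⟩ := hstd.2.2.1 μ hμ
  intro v hv
  rw [LinearMap.mem_ker, qSerreOp_apply_of_mem_eigenspace hq h2 hv]
  refine (iSup₂_le fun j hj => eigenspace_le_ker_aeval (qCubic_isRoot ?_))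
    (hstd.2.2.2 i ⟨v, hv, rfl⟩)
  rcases (by omega : (j : ℕ) = i ∨ (j : ℕ) + 1 = i ∨ (i : ℕ) + 1 = j) with h | h | h
  · exact Or.inl (congrArg θ (Fin.ext h))
  · exact Or.inr (Or.inl (hθ.eq_sq_mul_of_succ_eq hq h))
  · rw [hθ.eq_sq_mul_of_succ_eq hq h, inv_mul_cancel_left₀ (pow_ne_zero 2 hq)]
    exact Or.inr (Or.inr rfl)

lemma map_eigenspace_le_of_qSerreOp_eq_zero {q : K} (hq : q ≠ 0) (h2 : q ^ 2 ≠ 1)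
    (h4 : q ^ 4 ≠ 1) {X Y : Module.End K V} (hrel : qSerreOp q X Y = 0) {θ : K} (hθ : θ ≠ 0) :
    (X.eigenspace θ).map Y ≤
      X.eigenspace θ ⊔ X.eigenspace (q ^ 2 * θ) ⊔ X.eigenspace ((q ^ 2)⁻¹ * θ) := by
  rw [← ker_aeval_mul_X_sub_C_three]
  · rintro _ ⟨v, hv, rfl⟩
    rw [LinearMap.mem_ker, ← qCubic, ← qSerreOp_apply_of_mem_eigenspace hq h2 hv, hrel,
      LinearMap.zero_apply]
  · intro h
    exact h2 (mul_right_cancel₀ hθ (by rw [one_mul, ← h]))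
  · intro h
    exact h2 (inv_eq_one.mp (mul_right_cancel₀ hθ (by rw [one_mul, ← h])))
  · intro h
    apply h4
    rw [show q ^ 4 = q ^ 2 * q ^ 2 by ring]
    nth_rw 2 [mul_right_cancel₀ hθ h]
    exact mul_inv_cancel₀ (pow_ne_zero 2 hq)

end QSerre

section Construction

variable {K V : Type*} [Field K] [AddCommGroup V] [Module K V]

lemma isStdOrdering_of_isQString {q : K} (hq : q ≠ 0) (hq1 : ∀ n : ℕ, 0 < n → q ^ n ≠ 1)
    {X Y : Module.End K V} (hrel : qSerreOp q X Y = 0)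
    (hirr : ∀ W : Submodule K V, W.map X ≤ W → W.map Y ≤ W → W = ⊥ ∨ W = ⊤)
    {d : ℕ} {θ : Fin (d + 1) → K} (hθ : IsQString q d θ) (hev : ∀ i, X.HasEigenvalue (θ i))
    (hfirst : ¬ X.HasEigenvalue (q ^ 2 * θ 0))
    (hlast : ¬ X.HasEigenvalue ((q ^ 2)⁻¹ * θ (Fin.last d))) :
    (⨆ μ, X.eigenspace μ) = ⊤ ∧ IsStdOrdering X Y d θ := by
  have hY (i : Fin (d + 1)) : (X.eigenspace (θ i)).map Y ≤
      ⨆ j : Fin (d + 1), ⨆ _ : ((i : ℕ) : ℤ) - 1 ≤ ((j : ℕ) : ℤ) ∧ ((j : ℕ) : ℤ) ≤ (i : ℕ) + 1,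
        X.eigenspace (θ j) := by
    refine (map_eigenspace_le_of_qSerreOp_eq_zero hq (hq1 2 two_pos) (hq1 4 four_pos) hrel
      (hθ.apply_ne_zero hq i)).trans
      (sup_le (sup_le (le_iSup₂_of_le i ⟨by omega, by omega⟩ le_rfl) ?_) ?_)
    · by_cases hi : i = 0
      · rw [hi, not_ne_iff.mp (mt hasEigenvalue_iff.mpr hfirst)]
        exact bot_le
      · have hi : 0 < (i : ℕ) := Nat.pos_of_ne_zero (Fin.val_ne_zero_iff.mpr hi)
        rw [← hθ.eq_sq_mul_of_succ_eq hq (j := ⟨i - 1, by omega⟩) (by dsimp; omega)]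
        exact le_iSup₂_of_le ⟨i - 1, by omega⟩ ⟨by dsimp; omega, by dsimp; omega⟩ le_rfl
    · by_cases hi : i = Fin.last d
      · rw [hi, not_ne_iff.mp (mt hasEigenvalue_iff.mpr hlast)]
        exact bot_le
      · have hi : (i : ℕ) < d := Fin.val_lt_last hi
        rw [hθ.eq_sq_mul_of_succ_eq hq (i := ⟨i + 1, by omega⟩) (j := i) rfl,
          inv_mul_cancel_left₀ (pow_ne_zero 2 hq)]
        exact le_iSup₂_of_le ⟨i + 1, by omega⟩ ⟨by dsimp; omega, by dsimp; omega⟩ le_rfl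
  have htop : ⨆ i, X.eigenspace (θ i) = ⊤ := by
    refine (hirr _ ?_ ?_).resolve_left fun h =>
      hasEigenvalue_iff.mp (hev 0) (eq_bot_mono (le_iSup (fun i => X.eigenspace (θ i)) 0) h)
    · rw [Submodule.map_iSup]
      exact iSup_mono fun i => map_eigenspace_le (θ i)
    · rw [Submodule.map_iSup]
      exact iSup_le fun i =>
        (hY i).trans (iSup₂_le fun j _ => le_iSup (fun i => X.eigenspace (θ i)) j)
  exact ⟨top_unique (htop ▸ iSup_le fun i => le_iSup _ (θ i)), hθ.injective hq hq1, hev,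
    fun μ hμ => exists_eq_of_iSup_eigenspace_eq_top htop hμ, hY⟩

lemma exists_isStdOrdering_isQString [IsAlgClosed K] [FiniteDimensional K V] {q : K}
    (hq : q ≠ 0) (hq1 : ∀ n : ℕ, 0 < n → q ^ n ≠ 1) {X Y : Module.End K V}
    (hrel : qSerreOp q X Y = 0) (hX : ¬ IsNilpotent X)
    (hirr : ∀ W : Submodule K V, W.map X ≤ W → W.map Y ≤ W → W = ⊥ ∨ W = ⊤) :
    (⨆ μ, X.eigenspace μ) = ⊤ ∧
      ∃ (d : ℕ) (θ : Fin (d + 1) → K), IsStdOrdering X Y d θ ∧ IsQString q d θ := by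
  obtain ⟨β, hβ, hβev⟩ := exists_hasEigenvalue_ne_zero hX
  set e : ℤ → K := fun k => β * q ^ (2 * k) with he
  have he_inj : Function.Injective e := fun k l h => by
    have := zpow_injective_of_pow_ne_one hq hq1 (mul_left_cancel₀ hβ h)
    omega
  have he_succ (k : ℤ) : q ^ 2 * e k = e (k + 1) := by
    rw [he, mul_left_comm, ← zpow_natCast, ← zpow_add₀ hq]
    congr 2
    ring
  obtain ⟨m, M, hmM, hIcc, hm, hM⟩ :=
    ((X.finite_hasEigenvalue).preimage he_inj.injOn).exists_maximal_Icc_subset (k := 0)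
      (by simpa [he] using hβev)
  obtain ⟨d, rfl⟩ : ∃ d : ℕ, M = m + d := ⟨(M - m).toNat, by omega⟩
  let θ : Fin (d + 1) → K := fun i => β * q ^ (2 * m + d) * q ^ ((d : ℤ) - 2 * (i : ℕ))
  have hθe (i : Fin (d + 1)) : θ i = e (m + d - i) := by
    simp only [θ, he, mul_assoc, ← zpow_add₀ hq]
    congr 2
    ring
  have hθ : IsQString q d θ := ⟨_, mul_ne_zero hβ (zpow_ne_zero _ hq), fun i => rfl⟩
  obtain ⟨htop, hstd⟩ := isStdOrdering_of_isQString hq hq1 hrel hirr hθ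
    (fun i => by rw [hθe]; exact hIcc ⟨by omega, by omega⟩)
    (by rw [hθe, he_succ]; simpa using hM)
    (by rw [hθe, show m + d - (Fin.last d : ℕ) = m - 1 + 1 by simp, ← he_succ,
      inv_mul_cancel_left₀ (pow_ne_zero 2 hq)]; exact hm)
  exact ⟨htop, d, θ, hstd, hθ⟩

end Construction

theorem statement1_general {K : Type*} [Field K] [IsAlgClosed K]
    (q : K) (hq : q ≠ 0) (hq1 : ∀ n : ℕ, 0 < n → q ^ n ≠ 1)
    {V : Type*} [AddCommGroup V] [Module K V] [FiniteDimensional K V]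
    (A B : Module.End K V) :
    IsQGeometricTDP q A B ↔
      QSerre q A B ∧ ¬ IsNilpotent A ∧ ¬ IsNilpotent B ∧
        ∀ W : Submodule K V, Submodule.map A W ≤ W → Submodule.map B W ≤ W →
          W = ⊥ ∨ W = ⊤ := by
  constructor
  · rintro ⟨⟨htopA, htopB, -, -, hirr⟩, ⟨dA, θA, hstdA, hθA⟩, ⟨dB, θB, hstdB, hθB⟩⟩
    have h2 : q ^ 2 ≠ 1 := hq1 2 two_pos
    exact ⟨⟨qSerreOp_eq_zero_of_isStdOrdering hq h2 hstdA hθA htopA,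
        qSerreOp_eq_zero_of_isStdOrdering hq h2 hstdB hθB htopB⟩,
      not_isNilpotent_of_hasEigenvalue (hθA.apply_ne_zero hq 0) (hstdA.2.1 0),
      not_isNilpotent_of_hasEigenvalue (hθB.apply_ne_zero hq 0) (hstdB.2.1 0), hirr⟩
  · rintro ⟨⟨hAB, hBA⟩, hA, hB, hirr⟩
    obtain ⟨htopA, dA, θA, hstdA, hθA⟩ := exists_isStdOrdering_isQString hq hq1 hAB hA hirr
    obtain ⟨htopB, dB, θB, hstdB, hθB⟩ :=
      exists_isStdOrdering_isQString hq hq1 hBA hB fun W hWB hWA => hirr W hWA hWB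
    exact ⟨⟨htopA, htopB, ⟨dA, θA, hstdA⟩, ⟨dB, θB, hstdB⟩, hirr⟩, ⟨dA, θA, hstdA, hθA⟩,
      ⟨dB, θB, hstdB, hθB⟩⟩

/-- Theorem 2.7: `A, A*` is a `q`-geometric tridiagonal pair on `V` if and only
if `A, A*` satisfy the cubic `q`-Serre relations, neither is nilpotent, and the pair acts
irreducibly on `V`. -/
theorem statement1 {K : Type*} [Field K] [IsAlgClosed K] [CharZero K]
    (q : K) (hq : q ≠ 0) (hq1 : ∀ n : ℕ, 0 < n → q ^ n ≠ 1)
    {V : Type*} [AddCommGroup V] [Module K V] [FiniteDimensional K V] [Nontrivial V]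
    (A B : Module.End K V) :
    IsQGeometricTDP q A B ↔
      QSerre q A B ∧ ¬ IsNilpotent A ∧ ¬ IsNilpotent B ∧
        ∀ W : Submodule K V, Submodule.map A W ≤ W → Submodule.map B W ≤ W →
          W = ⊥ ∨ W = ⊤ :=
  statement1_general q hq hq1 A B
end
end

section
/- Let 𝒜 be a unital associative 𝕂-algebra and let e₀, e₁, K₀, K₁ ∈ 𝒜 with K₀ and K₁ invertible, satisfying: K₀K₁ = K₁K₀; K₀e₀K₀⁻¹ = q²e₀; K₀e₁K₀⁻¹ = q⁻²e₁; K₁e₁K₁⁻¹ = q²e₁; K₁e₀K₁⁻¹ = q⁻²e₀; and e₀, e₁ satisfy the cubic q-Serre relations. Then e₀ + K₀ and e₁ + K₁ satisfy the cubic q-Serre relations. -/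
set_option maxHeartbeats 1000000
noncomputable section

/-- Elements `x, y` of a unital associative `K`-algebra satisfy the cubic `q`-Serre relations. -/
def QSerreAlg {K A : Type*} [Field K] [Ring A] [Algebra K A] (q : K) (x y : A) : Prop :=
  x ^ 3 * y - qInt q 3 • (x ^ 2 * y * x) + qInt q 3 • (x * y * x ^ 2) - y * x ^ 3 = 0 ∧
  y ^ 3 * x - qInt q 3 • (y ^ 2 * x * y) + qInt q 3 • (y * x * y ^ 2) - x * y ^ 3 = 0

/-- Lemma 6.1: in a unital associative `K`-algebra with invertible `K₀, K₁`
satisfying the displayed relations, if `e₀, e₁` satisfy the cubic `q`-Serre relations then so do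
`e₀ + K₀` and `e₁ + K₁`. -/
theorem statement3 {K : Type*} [Field K] [IsAlgClosed K] [CharZero K]
    (q : K) (hq : q ≠ 0) (hq1 : ∀ n : ℕ, 0 < n → q ^ n ≠ 1)
    {A : Type*} [Ring A] [Algebra K A]
    (e0 e1 K0 K0i K1 K1i : A)
    (hK0 : K0 * K0i = 1) (hK0' : K0i * K0 = 1)
    (hK1 : K1 * K1i = 1) (hK1' : K1i * K1 = 1)
    (hcomm : K0 * K1 = K1 * K0)
    (h00 : K0 * e0 * K0i = q ^ 2 • e0)
    (h01 : K0 * e1 * K0i = q⁻¹ ^ 2 • e1)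
    (h11 : K1 * e1 * K1i = q ^ 2 • e1)
    (h10 : K1 * e0 * K1i = q⁻¹ ^ 2 • e0)
    (hserre : QSerreAlg q e0 e1) :
    QSerreAlg q (e0 + K0) (e1 + K1) := by
  have hq2 : q ^ 2 ≠ 1 := hq1 2 two_pos
  have hqq : q - q⁻¹ ≠ 0 := by
    intro h
    rw [sub_eq_zero] at h
    exact hq2 (by rw [sq]; nth_rewrite 2 [h]; exact mul_inv_cancel₀ hq)
  have c00' : K0 * e0 = (q ^ 2 : K) • (e0 * K0) := by
    have h : K0 * e0 * K0i * K0 = (q ^ 2 • e0) * K0 := by rw [h00]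
    rwa [mul_assoc (K0 * e0), hK0', mul_one, smul_mul_assoc] at h
  have c01' : K0 * e1 = (q⁻¹ ^ 2 : K) • (e1 * K0) := by
    have h : K0 * e1 * K0i * K0 = (q⁻¹ ^ 2 • e1) * K0 := by rw [h01]
    rwa [mul_assoc (K0 * e1), hK0', mul_one, smul_mul_assoc] at h
  have c11' : K1 * e1 = (q ^ 2 : K) • (e1 * K1) := by
    have h : K1 * e1 * K1i * K1 = (q ^ 2 • e1) * K1 := by rw [h11]
    rwa [mul_assoc (K1 * e1), hK1', mul_one, smul_mul_assoc] at h
  have c10' : K1 * e0 = (q⁻¹ ^ 2 : K) • (e0 * K1) := by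
    have h : K1 * e0 * K1i * K1 = (q⁻¹ ^ 2 • e0) * K1 := by rw [h10]
    rwa [mul_assoc (K1 * e0), hK1', mul_one, smul_mul_assoc] at h
  have c00 : ∀ z : A, K0 * (e0 * z) = (q ^ 2 : K) • (e0 * (K0 * z)) := fun z => by
    rw [← mul_assoc, c00', smul_mul_assoc, mul_assoc]
  have c01 : ∀ z : A, K0 * (e1 * z) = (q⁻¹ ^ 2 : K) • (e1 * (K0 * z)) := fun z => by
    rw [← mul_assoc, c01', smul_mul_assoc, mul_assoc]
  have c11 : ∀ z : A, K1 * (e1 * z) = (q ^ 2 : K) • (e1 * (K1 * z)) := fun z => by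
    rw [← mul_assoc, c11', smul_mul_assoc, mul_assoc]
  have c10 : ∀ z : A, K1 * (e0 * z) = (q⁻¹ ^ 2 : K) • (e0 * (K1 * z)) := fun z => by
    rw [← mul_assoc, c10', smul_mul_assoc, mul_assoc]
  have k10' : K1 * K0 = K0 * K1 := hcomm.symm
  have k10 : ∀ z : A, K1 * (K0 * z) = K0 * (K1 * z) := fun z => by
    rw [← mul_assoc, k10', mul_assoc]
  have h3 : qInt q 3 = q ^ 2 + 1 + q⁻¹ ^ 2 := by
    rw [qInt, div_eq_iff hqq]
    field_simp
    ring
  have hs1 : e1 * (e0 * (e0 * e0)) = e0 * (e0 * (e0 * e1))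
      - qInt q 3 • (e0 * (e0 * (e1 * e0))) + qInt q 3 • (e0 * (e1 * (e0 * e0))) := by
    have h := hserre.1
    simp only [pow_succ, pow_zero, one_mul, mul_assoc] at h
    rw [sub_eq_zero] at h
    exact h.symm
  have hs2 : e0 * (e1 * (e1 * e1)) = e1 * (e1 * (e1 * e0))
      - qInt q 3 • (e1 * (e1 * (e0 * e1))) + qInt q 3 • (e1 * (e0 * (e1 * e1))) := by
    have h := hserre.2
    simp only [pow_succ, pow_zero, one_mul, mul_assoc] at h
    rw [sub_eq_zero] at h
    exact h.symm
  constructor <;>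
  · simp only [pow_succ, pow_zero, one_mul, mul_add, add_mul, smul_add, smul_sub, mul_assoc,
      c00, c01, c11, c10, c00', c01', c11', c10', k10, k10', smul_mul_assoc, mul_smul_comm,
      smul_smul, hs1, hs2]
    rw [h3]
    match_scalars
    all_goals try ring
    all_goals simp only [inv_pow]
    all_goals field_simp
    all_goals try ring
end
end

section
/- Let U_0, …, U_d be a decomposition of V and let A : V → V be a linear map such that (A − q^{2i−d}I)U_i ⊆ U_{i+1} for 0 ≤ i ≤ d (where U_{d+1} = 0); then A is diagonalizable with eigenvalue set {q^{2i−d} : 0 ≤ i ≤ d}. For 0 ≤ i ≤ d let V_i denote the eigenspace of A for q^{2i−d}, let E_i denote the projection of V onto V_i determined by the eigenspace decomposition V = V_0 ⊕ ⋯ ⊕ V_d, and let F_i denote the projection of V onto U_i determined by the decomposition V = U_0 ⊕ ⋯ ⊕ U_d. Then for 0 ≤ i ≤ d: F_i(E_i u) = u for all u ∈ U_i and E_i(F_i v) = v for all v ∈ V_i; in particular the map u ↦ E_i u is a bijection from U_i onto V_i whose inverse is v ↦ F_i v. -/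
noncomputable section

/-- `U 0, …, U d` is a decomposition of `V` with diameter `d`: the `U i` with `i ≤ d` are nonzero,
`U i = 0` for `i > d`, and `V` is the (internal) direct sum of the `U i`. -/
def IsDecomposition {K V : Type*} [Field K] [AddCommGroup V] [Module K V]
    (d : ℕ) (U : ℕ → Submodule K V) : Prop :=
  (∀ i, i ≤ d → U i ≠ ⊥) ∧ (∀ i, d < i → U i = ⊥) ∧
  (⨆ i, U i) = ⊤ ∧
  ∀ i, Disjoint (U i) (⨆ j, ⨆ _ : j ≠ i, U j)

namespace Statement6Aux

variable {K : Type*} [Field K] {V : Type*} [AddCommGroup V] [Module K V]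

/-- The eigenvalue sequence. -/
def theta (q : K) (d : ℕ) (j : ℕ) : K := q ^ (2 * (j : ℤ) - (d : ℤ))

/-- Sum of the `U j` for `j ≥ m`. -/
def X (U : ℕ → Submodule K V) (m : ℕ) : Submodule K V := ⨆ j, ⨆ _ : m ≤ j, U j

lemma le_X (U : ℕ → Submodule K V) {j m : ℕ} (h : m ≤ j) : U j ≤ X U m :=
  le_iSup_of_le j (le_iSup_of_le h le_rfl)

lemma X_le (U : ℕ → Submodule K V) {m : ℕ} {p : Submodule K V}
    (h : ∀ j, m ≤ j → U j ≤ p) : X U m ≤ p :=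
  iSup_le fun j => iSup_le fun hj => h j hj

lemma X_mono (U : ℕ → Submodule K V) {m n : ℕ} (h : m ≤ n) : X U n ≤ X U m :=
  X_le U fun j hj => le_X U (h.trans hj)

/-- `Pk A θ k m = (A - θ m)(A - θ (m+1)) ⋯ (A - θ (m+k-1))`. -/
def Pk (A : Module.End K V) (θ : ℕ → K) : ℕ → ℕ → Module.End K V
  | 0, _ => 1
  | k + 1, m => (A - θ m • 1) * Pk A θ k (m + 1)

lemma Pk_zero (A : Module.End K V) (θ : ℕ → K) (m : ℕ) : Pk A θ 0 m = 1 := rfl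

lemma Pk_succ (A : Module.End K V) (θ : ℕ → K) (k m : ℕ) :
    Pk A θ (k + 1) m = (A - θ m • 1) * Pk A θ k (m + 1) := rfl

lemma commute_factor (A : Module.End K V) (θ : ℕ → K) (a b : ℕ) :
    Commute (A - θ a • 1) (A - θ b • 1) := by
  have h1 : Commute A ((θ b) • (1 : Module.End K V)) := (Commute.one_right A).smul_right _
  have h2 : Commute ((θ a) • (1 : Module.End K V)) A := (Commute.one_left A).smul_left _
  have h3 : Commute ((θ a) • (1 : Module.End K V)) ((θ b) • (1 : Module.End K V)) :=
    ((Commute.refl (1 : Module.End K V)).smul_right _).smul_left _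
  exact ((Commute.refl A).sub_right h1).sub_left (h2.sub_right h3)

lemma commute_Pk (A : Module.End K V) (θ : ℕ → K) (a : ℕ) :
    ∀ k m : ℕ, Commute (A - θ a • 1) (Pk A θ k m) := by
  intro k
  induction k with
  | zero => intro m; rw [Pk_zero]; exact Commute.one_right _
  | succ k ih =>
    intro m
    rw [Pk_succ]
    exact (commute_factor A θ a m).mul_right (ih (m + 1))

lemma Pk_succ' (A : Module.End K V) (θ : ℕ → K) (k m : ℕ) :
    Pk A θ (k + 1) m = Pk A θ k (m + 1) * (A - θ m • 1) := by
  rw [Pk_succ]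
  exact (commute_Pk A θ m k (m + 1)).eq

end Statement6Aux

open Statement6Aux

/-- Proposition 7.2: with `E i` the projection onto the eigenspace
`V_i = V_A(q^{2i−d})` determined by the eigenspace decomposition and `F i` the projection onto
`U i` determined by the decomposition `U 0, …, U d`, for `0 ≤ i ≤ d` the maps `u ↦ E i u` and
`v ↦ F i v` are mutually inverse bijections between `U i` and `V_i`. -/
theorem statement6 {K : Type*} [Field K] [IsAlgClosed K] [CharZero K]
    (q : K) (hq : q ≠ 0) (hq1 : ∀ n : ℕ, 0 < n → q ^ n ≠ 1)
    {V : Type*} [AddCommGroup V] [Module K V] [FiniteDimensional K V]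
    (d : ℕ) (U : ℕ → Submodule K V) (hU : IsDecomposition d U)
    (A : Module.End K V)
    (hA : ∀ i, i ≤ d → ∀ u ∈ U i, A u - q ^ (2 * (i : ℤ) - d) • u ∈ U (i + 1))
    (E F : ℕ → Module.End K V)
    (hE1 : ∀ i, i ≤ d → ∀ v ∈ Module.End.eigenspace A (q ^ (2 * (i : ℤ) - d)), E i v = v)
    (hE0 : ∀ i, i ≤ d → ∀ j, j ≤ d → j ≠ i →
      ∀ v ∈ Module.End.eigenspace A (q ^ (2 * (j : ℤ) - d)), E i v = 0)
    (hF1 : ∀ i, i ≤ d → ∀ u ∈ U i, F i u = u)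
    (hF0 : ∀ i, i ≤ d → ∀ j, j ≠ i → ∀ u ∈ U j, F i u = 0) :
    ∀ i, i ≤ d →
      (∀ u ∈ U i, E i u ∈ Module.End.eigenspace A (q ^ (2 * (i : ℤ) - d))) ∧
      (∀ v ∈ Module.End.eigenspace A (q ^ (2 * (i : ℤ) - d)), F i v ∈ U i) ∧
      (∀ u ∈ U i, F i (E i u) = u) ∧
      (∀ v ∈ Module.End.eigenspace A (q ^ (2 * (i : ℤ) - d)), E i (F i v) = v) := by
  classical
  set θ : ℕ → K := theta q d with hθdef
  -- q is not a root of unity, in ℤ-power form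
  have hroot : ∀ z : ℤ, q ^ z = 1 → z = 0 := by
    intro z hz
    by_contra h0
    rcases lt_or_gt_of_ne h0 with h | h
    · have h1 : q ^ (-z) = 1 := by rw [zpow_neg, hz, inv_one]
      have h2 : q ^ (-z).toNat = 1 := by
        rw [← zpow_natCast, Int.toNat_of_nonneg (by omega)]; exact h1
      exact hq1 _ (by omega) h2
    · have h2 : q ^ z.toNat = 1 := by
        rw [← zpow_natCast, Int.toNat_of_nonneg (by omega)]; exact hz
      exact hq1 _ (by omega) h2
  -- the eigenvalues are pairwise distinct
  have hθne : ∀ a b : ℕ, a ≠ b → θ a ≠ θ b := by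
    intro a b hab h
    have hz : q ^ ((2 * (a : ℤ) - d) - (2 * (b : ℤ) - d)) = 1 := by
      rw [zpow_sub₀ hq]
      rw [show q ^ (2 * (a : ℤ) - d) = q ^ (2 * (b : ℤ) - d) from h]
      exact div_self (zpow_ne_zero _ hq)
    have := hroot _ hz
    omega
  -- A-invariance of the upper sums X U m
  have hAX : ∀ m : ℕ, ∀ u ∈ X U m, A u ∈ X U m := by
    intro m
    have hle : X U m ≤ Submodule.comap A (X U m) := by
      apply X_le
      intro j hj u hu
      simp only [Submodule.mem_comap]
      by_cases hjd : j ≤ d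
      · have h1 : A u - θ j • u ∈ U (j + 1) := hA j hjd u hu
        have h2 : A u = (A u - θ j • u) + θ j • u := by abel
        rw [h2]
        exact add_mem (le_X U (by omega) h1) (Submodule.smul_mem _ _ (le_X U hj hu))
      · have h0 : u = 0 := by
          rw [hU.2.1 j (by omega), Submodule.mem_bot] at hu; exact hu
        simp [h0]
    exact fun u hu => hle hu
  have hXbot : ∀ m, d < m → X U m = ⊥ := by
    intro m hm
    rw [eq_bot_iff]
    exact X_le U fun j hj => le_of_eq (hU.2.1 j (by omega))
  have hXsplit : ∀ m, X U m = U m ⊔ X U (m + 1) := by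
    intro m
    apply le_antisymm
    · apply X_le
      intro j hj
      rcases eq_or_lt_of_le hj with h | h
      · rw [← h]; exact le_sup_left
      · exact le_sup_of_le_right (le_X U h)
    · exact sup_le (le_X U le_rfl) (X_mono U (Nat.le_succ m))
  have hdisj : ∀ k, Disjoint (U k) (X U (k + 1)) := by
    intro k
    exact (hU.2.2.2 k).mono_right
      (X_le U fun j hj => le_iSup_of_le j (le_iSup_of_le (by omega : j ≠ k) le_rfl))
  -- action of Pk on cosets u + X U (i+1), u ∈ U i
  have hPact : ∀ k m i : ℕ, i ≤ d → i < m → ∀ u ∈ U i, ∀ r ∈ X U (i + 1),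
      ∃ r' ∈ X U (i + 1),
        Pk A θ k m (u + r) = (∏ j ∈ Finset.Ico m (m + k), (θ i - θ j)) • u + r' := by
    intro k
    induction k with
    | zero =>
      intro m i _ _ u hu r hr
      refine ⟨r, hr, ?_⟩
      simp [Pk_zero]
    | succ k ih =>
      intro m i hi him u hu r hr
      obtain ⟨r', hr', heq⟩ := ih (m + 1) i hi (by omega) u hu r hr
      refine ⟨(∏ j ∈ Finset.Ico (m + 1) (m + 1 + k), (θ i - θ j)) • (A u - θ i • u)
        + (A r' - θ m • r'), ?_, ?_⟩
      · exact add_mem (Submodule.smul_mem _ _ (le_X U le_rfl (hA i hi u hu)))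
          (sub_mem (hAX _ r' hr') (Submodule.smul_mem _ _ hr'))
      · have hico : Finset.Ico m (m + (k + 1)) = insert m (Finset.Ico (m + 1) (m + 1 + k)) := by
          ext x; simp only [Finset.mem_Ico, Finset.mem_insert]; omega
        have hnot : m ∉ Finset.Ico (m + 1) (m + 1 + k) := by simp
        rw [Pk_succ, Module.End.mul_apply, heq, hico, Finset.prod_insert hnot]
        simp only [LinearMap.sub_apply, LinearMap.smul_apply, Module.End.one_apply,
          map_add, map_smul]
        module
  -- Pk (d+1-m) m kills X U m
  have hPkill : ∀ k m : ℕ, d + 1 ≤ m + k → ∀ u ∈ X U m, Pk A θ (d + 1 - m) m u = 0 := by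
    intro k
    induction k with
    | zero =>
      intro m hm u hu
      rw [hXbot m (by omega), Submodule.mem_bot] at hu
      simp [hu]
    | succ k ih =>
      intro m hm u hu
      by_cases hmk : d + 1 ≤ m + k
      · exact ih m hmk u hu
      · have hmd : m ≤ d := by omega
        have hsub : d + 1 - m = (d - m) + 1 := by omega
        have hsub2 : d + 1 - (m + 1) = d - m := by omega
        rw [hXsplit m] at hu
        obtain ⟨a, ha, b, hb, hab⟩ := Submodule.mem_sup.mp hu
        have hPa : Pk A θ (d + 1 - m) m a = 0 := by
          rw [hsub, Pk_succ', Module.End.mul_apply]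
          have h1 : (A - θ m • 1) a = A a - θ m • a := by
            simp [LinearMap.sub_apply]
          have h2 : (A - θ m • 1) a ∈ X U (m + 1) := by
            rw [h1]; exact le_X U le_rfl (hA m hmd a ha)
          have := ih (m + 1) (by omega) _ h2
          rwa [hsub2] at this
        have hPb : Pk A θ (d + 1 - m) m b = 0 := by
          rw [hsub, Pk_succ, Module.End.mul_apply]
          have := ih (m + 1) (by omega) b hb
          rw [hsub2] at this
          rw [this, map_zero]
        rw [← hab, map_add, hPa, hPb, add_zero]
  -- action of Pk on eigenvectors
  have hPeig : ∀ (μ : K) (k m : ℕ) (v : V), A v = μ • v →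
      Pk A θ k m v = (∏ j ∈ Finset.Ico m (m + k), (μ - θ j)) • v := by
    intro μ k
    induction k with
    | zero => intro m v _; simp [Pk_zero]
    | succ k ih =>
      intro m v hv
      have hico : Finset.Ico m (m + (k + 1)) = insert m (Finset.Ico (m + 1) (m + 1 + k)) := by
        ext x; simp only [Finset.mem_Ico, Finset.mem_insert]; omega
      have hnot : m ∉ Finset.Ico (m + 1) (m + 1 + k) := by simp
      rw [Pk_succ, Module.End.mul_apply, ih (m + 1) v hv, hico, Finset.prod_insert hnot]
      simp only [LinearMap.sub_apply, LinearMap.smul_apply, Module.End.one_apply, map_smul, hv]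
      module
  -- construction of the eigenvector associated with u ∈ U i
  have hW : ∀ i, i ≤ d → ∀ u ∈ U i,
      ∃ w r : V, A w = θ i • w ∧ r ∈ X U (i + 1) ∧ u = w + r := by
    intro i hi u hu
    have hidx : i + 1 + (d - i) = d + 1 := by omega
    set c := ∏ j ∈ Finset.Ico (i + 1) (i + 1 + (d - i)), (θ i - θ j) with hc
    have hc0 : c ≠ 0 := Finset.prod_ne_zero_iff.mpr fun j hj => by
      rw [Finset.mem_Ico] at hj
      exact sub_ne_zero_of_ne (hθne i j (by omega))
    obtain ⟨r', hr', heq⟩ := hPact (d - i) (i + 1) i hi (by omega) u hu 0 (zero_mem _)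
    rw [add_zero] at heq
    have hkill : Pk A θ (d + 1 - i) i u = 0 :=
      hPkill (d + 1 - i) i (by omega) u (le_X U le_rfl hu)
    have hsub : d + 1 - i = (d - i) + 1 := by omega
    rw [hsub, Pk_succ, Module.End.mul_apply] at hkill
    have heig : A (Pk A θ (d - i) (i + 1) u) = θ i • (Pk A θ (d - i) (i + 1) u) := by
      have h2 : A (Pk A θ (d - i) (i + 1) u) - θ i • (Pk A θ (d - i) (i + 1) u) = 0 := by
        simpa [LinearMap.sub_apply] using hkill
      exact sub_eq_zero.mp h2
    refine ⟨c⁻¹ • Pk A θ (d - i) (i + 1) u, -(c⁻¹ • r'), ?_, ?_, ?_⟩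
    · rw [map_smul, heig, smul_comm]
    · exact neg_mem (Submodule.smul_mem _ _ hr')
    · have h3 : c⁻¹ • (Pk A θ (d - i) (i + 1) u) = u + c⁻¹ • r' := by
        rw [heq, ← hc, smul_add, smul_smul, inv_mul_cancel₀ hc0, one_smul]
      rw [h3]; abel
  -- every element of X U m is a sum of eigenvectors with eigenvalues θ j, m ≤ j ≤ d
  have hS : ∀ k m : ℕ, d + 1 ≤ m + k → ∀ u ∈ X U m, ∃ v : ℕ → V,
      (∀ j, A (v j) = θ j • v j) ∧ u = ∑ j ∈ Finset.Icc m d, v j := by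
    intro k
    induction k with
    | zero =>
      intro m hm u hu
      rw [hXbot m (by omega), Submodule.mem_bot] at hu
      refine ⟨fun _ => 0, fun j => by simp, ?_⟩
      rw [hu, Finset.Icc_eq_empty (by omega), Finset.sum_empty]
    | succ k ih =>
      intro m hm u hu
      by_cases hmk : d + 1 ≤ m + k
      · exact ih m hmk u hu
      · have hmd : m ≤ d := by omega
        rw [hXsplit m] at hu
        obtain ⟨a, ha, b, hb, hab⟩ := Submodule.mem_sup.mp hu
        obtain ⟨w, r, hw, hr, har⟩ := hW m hmd a ha
        obtain ⟨v', hv', hsum⟩ := ih (m + 1) (by omega) (b + r) (add_mem hb hr)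
        refine ⟨fun j => if j = m then w else v' j, ?_, ?_⟩
        · intro j
          by_cases hj : j = m
          · simp only [hj, if_pos rfl]; exact hw
          · simp only [if_neg hj]; exact hv' j
        · have hicc : Finset.Icc m d = insert m (Finset.Icc (m + 1) d) := by
            ext x; simp only [Finset.mem_Icc, Finset.mem_insert]; omega
          have hnot : m ∉ Finset.Icc (m + 1) d := by simp
          rw [hicc, Finset.sum_insert hnot, if_pos rfl]
          have hcong : ∑ j ∈ Finset.Icc (m + 1) d, (if j = m then w else v' j)
              = ∑ j ∈ Finset.Icc (m + 1) d, v' j :=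
            Finset.sum_congr rfl fun j hj => if_neg (by
              rw [Finset.mem_Icc] at hj; omega)
          rw [hcong, ← hsum, ← hab, har]
          abel
  -- every eigenvector for θ i lies in X U i
  have hVX : ∀ i, i ≤ d → ∀ v : V, A v = θ i • v → v ∈ X U i := by
    intro i hi v hv
    have key : ∀ k, k ≤ i → v ∈ X U k := by
      intro k
      induction k with
      | zero =>
        intro _
        have htop : X U 0 = ⊤ := by
          rw [eq_top_iff, ← hU.2.2.1]
          exact iSup_le fun j => le_X U (Nat.zero_le j)
        rw [htop]; trivial
      | succ k ihk =>
        intro hk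
        have hvk := ihk (by omega)
        rw [hXsplit k] at hvk
        obtain ⟨a, ha, b, hb, hab⟩ := Submodule.mem_sup.mp hvk
        have h1 : Pk A θ (d - k) (k + 1) v = 0 := by
          rw [hPeig (θ i) _ _ v hv]
          rw [Finset.prod_eq_zero (Finset.mem_Ico.mpr ⟨by omega, by omega⟩ :
            i ∈ Finset.Ico (k + 1) (k + 1 + (d - k))) (sub_self (θ i))]
          simp
        have h2 : Pk A θ (d - k) (k + 1) b = 0 := by
          have := hPkill (d - k) (k + 1) (by omega) b hb
          rwa [show d + 1 - (k + 1) = d - k from by omega] at this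
        have h3 : Pk A θ (d - k) (k + 1) a = 0 := by
          have h4 : Pk A θ (d - k) (k + 1) (a + b) = 0 := by rw [hab]; exact h1
          rwa [map_add, h2, add_zero] at h4
        obtain ⟨r', hr', heq⟩ := hPact (d - k) (k + 1) k (by omega) (by omega) a ha 0 (zero_mem _)
        rw [add_zero, h3] at heq
        have hcne : (∏ j ∈ Finset.Ico (k + 1) (k + 1 + (d - k)), (θ k - θ j)) ≠ 0 :=
          Finset.prod_ne_zero_iff.mpr fun j hj => by
            rw [Finset.mem_Ico] at hj
            exact sub_ne_zero_of_ne (hθne k j (by omega))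
        have haX : a ∈ X U (k + 1) := by
          have ha' : a = (∏ j ∈ Finset.Ico (k + 1) (k + 1 + (d - k)), (θ k - θ j))⁻¹ • (-r') := by
            have h5 : (∏ j ∈ Finset.Ico (k + 1) (k + 1 + (d - k)), (θ k - θ j)) • a = -r' := by
              have h6 : (∏ j ∈ Finset.Ico (k + 1) (k + 1 + (d - k)), (θ k - θ j)) • a + r' = 0 :=
                heq.symm
              exact add_eq_zero_iff_eq_neg.mp h6
            rw [← h5, smul_smul, inv_mul_cancel₀ hcne, one_smul]
          rw [ha']
          exact Submodule.smul_mem _ _ (neg_mem hr')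
        have ha0 : a = 0 := (Submodule.disjoint_def.mp (hdisj k)) a ha haX
        rw [← hab, ha0, zero_add]
        exact hb
    exact key i le_rfl
  -- an eigenvector for θ i lying in X U (i+1) is zero
  have hsmall : ∀ i, i ≤ d → ∀ v : V, A v = θ i • v → v ∈ X U (i + 1) → v = 0 := by
    intro i hi v hv hvX
    have h1 := hPkill (d - i) (i + 1) (by omega) v hvX
    rw [show d + 1 - (i + 1) = d - i from by omega, hPeig (θ i) _ _ v hv] at h1
    have hcne : (∏ j ∈ Finset.Ico (i + 1) (i + 1 + (d - i)), (θ i - θ j)) ≠ 0 :=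
      Finset.prod_ne_zero_iff.mpr fun j hj => by
        rw [Finset.mem_Ico] at hj
        exact sub_ne_zero_of_ne (hθne i j (by omega))
    exact (smul_eq_zero.mp h1).resolve_left hcne
  -- computation of E i on w + r
  have hEw : ∀ i, i ≤ d → ∀ w r : V, A w = θ i • w → r ∈ X U (i + 1) → E i (w + r) = w := by
    intro i hi w r hw hr
    obtain ⟨v, hv, hsum⟩ := hS (d - i) (i + 1) (by omega) r hr
    rw [map_add]
    have h1 : E i w = w := hE1 i hi w (Module.End.mem_eigenspace_iff.mpr hw)
    have h2 : E i r = 0 := by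
      rw [hsum, map_sum]
      apply Finset.sum_eq_zero
      intro j hj
      rw [Finset.mem_Icc] at hj
      exact hE0 i hi j hj.2 (by omega) (v j) (Module.End.mem_eigenspace_iff.mpr (hv j))
    rw [h1, h2, add_zero]
  -- F i vanishes on X U (i+1)
  have hFker : ∀ i, i ≤ d → ∀ r ∈ X U (i + 1), F i r = 0 := by
    intro i hi r hr
    have hle : X U (i + 1) ≤ LinearMap.ker (F i) :=
      X_le U fun j hj => fun u hu => LinearMap.mem_ker.mpr (hF0 i hi j (by omega) u hu)
    exact LinearMap.mem_ker.mp (hle hr)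
  -- main proof
  intro i hid
  have key1 : ∀ u ∈ U i, E i u ∈ Module.End.eigenspace A (θ i) ∧ F i (E i u) = u := by
    intro u hu
    obtain ⟨w, r, hw, hr, hur⟩ := hW i hid u hu
    have hE : E i u = w := by rw [hur]; exact hEw i hid w r hw hr
    constructor
    · rw [hE]; exact Module.End.mem_eigenspace_iff.mpr hw
    · rw [hE]
      have hwu : w = u - r := by rw [hur]; abel
      rw [hwu, map_sub, hF1 i hid u hu, hFker i hid r hr, sub_zero]
  have key2 : ∀ v ∈ Module.End.eigenspace A (θ i), F i v ∈ U i ∧ E i (F i v) = v := by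
    intro v hv
    have hv' : A v = θ i • v := Module.End.mem_eigenspace_iff.mp hv
    have hvX := hVX i hid v hv'
    rw [hXsplit i] at hvX
    obtain ⟨u, hu, r, hr, huv⟩ := Submodule.mem_sup.mp hvX
    have hFv : F i v = u := by
      rw [← huv, map_add, hF1 i hid u hu, hFker i hid r hr, add_zero]
    obtain ⟨w, r2, hw, hr2, hur2⟩ := hW i hid u hu
    have hEu : E i u = w := by rw [hur2]; exact hEw i hid w r2 hw hr2
    have hvw : v - w = 0 := by
      apply hsmall i hid
      · rw [map_sub, hv', hw, smul_sub]
      · have hdiff : v - w = r + r2 := by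
          rw [← huv]
          have hw2 : w = u - r2 := by rw [hur2]; abel
          rw [hw2]; abel
        rw [hdiff]
        exact add_mem hr hr2
    have hveq : v = w := sub_eq_zero.mp hvw
    constructor
    · rw [hFv]; exact hu
    · rw [hFv, hEu, ← hveq]
  exact ⟨fun u hu => (key1 u hu).1, fun v hv => (key2 v hv).1,
    fun u hu => (key1 u hu).2, fun v hv => (key2 v hv).2⟩
end
end
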